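/- arXiv:2208.08318 — 2 statements merged into one kernel-verified Lean document; each statement's English description precedes it below -/
import Mathlib

section
/- Let s ≥ 1. Suppose integers b_1, b_2, c_1,…,c_s, d_1,…,d_{2n-1}, e_1,…,e_{2m-1} satisfy: b_1 = 0; -3b_1 + c_1 + d_1 + d_{2n-1} + 2 = 0; b_1 - 2d_1 + d_2 = 0; d_{j+1} = 2d_j - d_{j-1} for 2 ≤ j ≤ 2n-2; d_{2n-1} determined by the cyclic condition d_j = d_{2n-j}; c_{i+1} = 2c_i - c_{i-1} for 2 ≤ i ≤ s-1 with b_1 - 2c_1 + c_2 = 0; b_2 - 2c_s + c_{s-1} = 0; e_k = e_{2m-k}; -3b_2 + c_s + 2e_1 - 2 = 0; e_{k-1} - 2e_k + e_{k+1} = 0 for 1 < k < 2m-1; e_{2m-2} - 2e_{2m-1} + b_2 = 0. Then d_j = 0 for all j, c_i = -2i for all i, b_2 = -2(s+1), and e_k = -2(s+1) for all k. -/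
private lemma chain_lin (f : ℕ → ℤ) (N : ℕ)
    (hch : ∀ j, 2 ≤ j → j ≤ N → f (j + 1) = 2 * f j - f (j - 1)) :
    ∀ j, 1 ≤ j → j ≤ N + 1 → f j = f 1 + ((j : ℤ) - 1) * (f 2 - f 1) := by
  intro j
  induction j using Nat.strong_induction_on with
  | _ j ih =>
    intro h1 h2
    match j, h1 with
    | 1, _ => simp
    | 2, _ => push_cast; ring
    | (k+3), _ =>
      have h := hch (k+2) (by omega) (by omega)
      have i1 := ih (k+2) (by omega) (by omega) (by omega)
      have i2 := ih (k+1) (by omega) (by omega) (by omega)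
      have e1 : k + 2 - 1 = k + 1 := by omega
      rw [e1] at h
      rw [h, i1, i2]; push_cast; ring

/-- Case VI, first element: the intersection equations for the coefficients of
`div(f̄_P)` (normalized so that the coefficient of `B₁` is `0`) force
`d ≡ 0`, `c i = -2i`, `b₂ = -2(s+1)` and `e ≡ -2(s+1)`.
(The conventions `c 0 = b₁`, `e 0 = b₂` record that the chain `X` is attached to
`B₁` and the cycle `Z` is attached to `B₂`.) -/
theorem stmt_3 (s n m : ℕ) (hs : 1 ≤ s) (hn : 1 ≤ n) (hm : 1 ≤ m)
    (b₁ b₂ : ℤ) (c d e : ℕ → ℤ)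
    (hb₁ : b₁ = 0)
    (hB₁ : -3 * b₁ + c 1 + d 1 + d (2 * n - 1) + 2 = 0)
    (hd1 : b₁ - 2 * d 1 + d 2 = 0)
    (hdchain : ∀ j, 2 ≤ j → j ≤ 2 * n - 2 → d (j + 1) = 2 * d j - d (j - 1))
    (hdsym : ∀ j, 1 ≤ j → j ≤ 2 * n - 1 → d j = d (2 * n - j))
    (hc0 : c 0 = b₁)
    (hcchain : ∀ i, 2 ≤ i → i ≤ s - 1 → c (i + 1) = 2 * c i - c (i - 1))
    (hc1 : b₁ - 2 * c 1 + c 2 = 0)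
    (hcs : b₂ - 2 * c s + c (s - 1) = 0)
    (hesym : ∀ k, 1 ≤ k → k ≤ 2 * m - 1 → e k = e (2 * m - k))
    (he0 : e 0 = b₂)
    (hB₂ : -3 * b₂ + c s + 2 * e 1 - 2 = 0)
    (hechain : ∀ k, 1 < k → k < 2 * m - 1 → e (k - 1) - 2 * e k + e (k + 1) = 0)
    (helast : e (2 * m - 2) - 2 * e (2 * m - 1) + b₂ = 0) :
    (∀ j, 1 ≤ j → j ≤ 2 * n - 1 → d j = 0) ∧
    (∀ i, 1 ≤ i → i ≤ s → c i = -2 * i) ∧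
    b₂ = -2 * (s + 1) ∧
    (∀ k, 1 ≤ k → k ≤ 2 * m - 1 → e k = -2 * (s + 1)) := by
  subst hb₁
  -- the chain `c` is an arithmetic progression, in fact `c i = i * c 1`
  have hclin := chain_lin c (s - 1) hcchain
  have hc2 : c 2 = 2 * c 1 := by linarith
  have hc : ∀ i, 1 ≤ i → i ≤ s → c i = (i : ℤ) * c 1 := by
    intro i h1 h2
    have := hclin i h1 (by omega)
    rw [hc2] at this
    rw [this]; ring
  -- `c (s-1)` : either `s = 1` (then it is `c 0 = 0`) or `s ≥ 2`
  have hcsm1 : c (s - 1) = ((s : ℤ) - 1) * c 1 := by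
    rcases Nat.eq_or_lt_of_le hs with h | h
    · have : s - 1 = 0 := by omega
      rw [this, hc0, ← h]; ring
    · have h1 : (1 : ℕ) ≤ s - 1 := by omega
      have := hc (s - 1) h1 (by omega)
      rw [this]
      have : ((s - 1 : ℕ) : ℤ) = (s : ℤ) - 1 := by omega
      rw [this]
    -- done
  have hcsv : c s = (s : ℤ) * c 1 := hc s hs le_rfl
  have hb2 : b₂ = ((s : ℤ) + 1) * c 1 := by
    rw [hcsv, hcsm1] at hcs; linarith
  -- the cycle `e` : all values equal `b₂`
  have heb : ∀ k, 1 ≤ k → k ≤ 2 * m - 1 → e k = b₂ := by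
    rcases Nat.eq_or_lt_of_le hm with h | h
    · -- m = 1
      intro k h1 h2
      have hk : k = 1 := by omega
      have h2m2 : 2 * m - 2 = 0 := by omega
      have h2m1 : 2 * m - 1 = 1 := by omega
      rw [h2m2, h2m1, he0] at helast
      rw [hk]; linarith
    · -- m ≥ 2
      have helin := chain_lin e (2 * m - 2) (by
        intro j hj1 hj2
        have := hechain j (by omega) (by omega)
        linarith)
      have hN : 2 * m - 2 + 1 = 2 * m - 1 := by omega
      rw [hN] at helin
      -- symmetry at k = 1 forces the common difference to vanish
      have hsym1 := hesym 1 le_rfl (by omega)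
      have hlast := helin (2 * m - 1) (by omega) le_rfl
      have hcast : ((2 * m - 1 : ℕ) : ℤ) - 1 = 2 * (m : ℤ) - 2 := by omega
      rw [hcast] at hlast
      have ht : e 2 - e 1 = 0 := by
        have h0 : (2 * (m : ℤ) - 2) * (e 2 - e 1) = 0 := by
          rw [← hsym1] at hlast; linarith
        have hm2 : (2 * (m : ℤ) - 2) ≠ 0 := by
          have : (2 : ℤ) ≤ (m : ℤ) := by exact_mod_cast h
          omega
        exact (mul_eq_zero.mp h0).resolve_left hm2
      have hall : ∀ k, 1 ≤ k → k ≤ 2 * m - 1 → e k = e 1 := by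
        intro k h1 h2
        have := helin k h1 h2
        rw [ht] at this; rw [this]; ring
      have he2m2 : e (2 * m - 2) = e 1 := hall (2 * m - 2) (by omega) (by omega)
      have he2m1 : e (2 * m - 1) = e 1 := hall (2 * m - 1) (by omega) le_rfl
      have he1 : e 1 = b₂ := by rw [he2m2, he2m1] at helast; linarith
      intro k h1 h2
      rw [hall k h1 h2, he1]
  -- second relation between `b₂` and `c 1`, giving `c 1 = -2`
  have he1b : e 1 = b₂ := heb 1 le_rfl (by omega)
  have hb2' : b₂ = (s : ℤ) * c 1 - 2 := by
    rw [he1b, hcsv] at hB₂; linarith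
  have hc1v : c 1 = -2 := by
    rw [hb2'] at hb2; linarith
  -- the chain `d` : `d j = j * d 1`, and `hB₁` forces `d 1 = 0`
  have hdlin := chain_lin d (2 * n - 2) hdchain
  have hNd : 2 * n - 2 + 1 = 2 * n - 1 := by omega
  rw [hNd] at hdlin
  have hd2 : d 2 = 2 * d 1 := by linarith
  have hd : ∀ j, 1 ≤ j → j ≤ 2 * n - 1 → d j = (j : ℤ) * d 1 := by
    intro j h1 h2
    have := hdlin j h1 h2
    rw [hd2] at this; rw [this]; ring
  have hdlast : d (2 * n - 1) = ((2 * n - 1 : ℕ) : ℤ) * d 1 :=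
    hd (2 * n - 1) (by omega) le_rfl
  have hcastd : ((2 * n - 1 : ℕ) : ℤ) = 2 * (n : ℤ) - 1 := by omega
  rw [hcastd] at hdlast
  have hd1z : d 1 = 0 := by
    rw [hdlast, hc1v] at hB₁
    have hn' : (1 : ℤ) ≤ (n : ℤ) := by exact_mod_cast hn
    have : 2 * (n : ℤ) * d 1 = 0 := by linarith
    have h2n : (2 * (n : ℤ)) ≠ 0 := by omega
    exact (mul_eq_zero.mp this).resolve_left h2n
  refine ⟨?_, ?_, ?_, ?_⟩
  · intro j h1 h2
    rw [hd j h1 h2, hd1z, mul_zero]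
  · intro i h1 h2
    rw [hc i h1 h2, hc1v]; ring
  · rw [hb2, hc1v]; ring
  · intro k h1 h2
    rw [heb k h1 h2, hb2, hc1v]; ring
end

section
/- Let r, s ≥ 1 and consider vectors in ℚ^{2 + r + (2n-1) + (2m-1)} indexed by (B_1, X_1..X_s, Y_1..Y_{2n-1}, Z_1..Z_{2m-1}, B_2) for the Case VI configuration. Let u be the all-ones vector; let v be the vector with B_1-coefficient s+1, Y-coefficients all s+1, X_i-coefficient (s+1-2i) antisymmetrized as (s+1-2i) at X_i, B_2-coefficient -(s+1), Z-coefficients all -(s+1); let w be the vector with X_i-coefficient -2i, B_2-coefficient -2(s+1), Z_k-coefficient -(2(s+1) + min(k, 2m-k)), all other coefficients 0. Then u, v, w are linearly independent over ℚ. -/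
/-- Case VI surjectivity: on the components
`(B₁; X₁,…,X_s; Y₁,…,Y_{2n-1}; Z₁,…,Z_{2m-1}; B₂)` the three boundary classes —
`u` the all-ones vector, `v = (1/2)∂Ξ_{P,Q}` with `B₁`- and `Y`-coordinates `s+1`,
`X_i`-coordinate `s+1-2i`, `B₂`- and `Z`-coordinates `-(s+1)`, and
`w = div(f̄_P)` for the second element with `X_i`-coordinate `-2i`,
`B₂`-coordinate `-2(s+1)`, `Z_k`-coordinate `-(2(s+1) + min(k, 2m-k))` and the
rest `0` — are linearly independent over `ℚ`. -/
theorem stmt_13 (s n m : ℕ) (hs : 1 ≤ s) (hn : 1 ≤ n) (hm : 1 ≤ m) :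
    LinearIndependent ℚ
      ![(fun _ => 1 : Fin (2 + s + (2 * n - 1) + (2 * m - 1)) → ℚ),
        (fun i => if 1 ≤ (i : ℕ) ∧ (i : ℕ) ≤ s then (s : ℚ) + 1 - 2 * (i : ℕ)
          else if (i : ℕ) ≤ s + 2 * n - 1 then (s : ℚ) + 1
          else -((s : ℚ) + 1) : Fin (2 + s + (2 * n - 1) + (2 * m - 1)) → ℚ),
        (fun i => if (i : ℕ) = 0 then 0
          else if (i : ℕ) ≤ s then -2 * ((i : ℕ) : ℚ)
          else if (i : ℕ) ≤ s + 2 * n - 1 then 0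
          else if (i : ℕ) = s + 2 * n + 2 * m - 1 then -2 * ((s : ℚ) + 1)
          else -(2 * ((s : ℚ) + 1) +
            ((min ((i : ℕ) - s - 2 * n + 1) (2 * m - ((i : ℕ) - s - 2 * n + 1)) : ℕ) : ℚ))
          : Fin (2 + s + (2 * n - 1) + (2 * m - 1)) → ℚ)] := by
  rw [Fintype.linearIndependent_iff]
  intro g hg
  have h0 := congrFun hg ⟨0, by omega⟩
  have h1 := congrFun hg ⟨1, by omega⟩
  have h2 := congrFun hg ⟨s + 2 * n, by omega⟩
  simp only [Fin.sum_univ_three, Finset.sum_apply, Pi.add_apply, Pi.smul_apply,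
    smul_eq_mul, Matrix.cons_val_zero, Matrix.cons_val_one, Matrix.head_cons,
    Matrix.cons_val_two, Matrix.tail_cons, Pi.zero_apply] at h0 h1 h2
  rw [if_neg (by omega), if_pos (by omega), if_pos trivial] at h0
  rw [if_pos (by omega : 1 ≤ 1 ∧ 1 ≤ s), if_neg (by omega), if_pos hs] at h1
  rw [if_neg (by omega), if_neg (by omega), if_neg (by omega), if_neg (by omega),
    if_neg (by omega), if_neg (by omega)] at h2
  have hmin : s + 2 * n - s - 2 * n + 1 = 1 := by omega
  rw [hmin] at h2
  have hmin2 : min 1 (2 * m - 1) = 1 := by omega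
  rw [hmin2] at h2
  push_cast at h0 h1 h2
  have hg1 : g 1 = 0 := by
    linear_combination (2*(s:ℚ)+3)/2 * h0 - (2*(s:ℚ)+3)/2 * h1 - h0 + h2
  have hg2 : g 2 = 0 := by linear_combination h0/2 - h1/2 - hg1
  have hg0 : g 0 = 0 := by linear_combination h0 - ((s:ℚ)+1) * hg1
  intro i
  fin_cases i <;> assumption
end
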